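/- arXiv:0907.2964 — 2 statements merged into one kernel-verified Lean document; each statement's English description precedes it below -/
import Mathlib

section
/- Let Θ be a non-constant inner function and φ ∈ L²(∂𝔻). Then ‖P_Θ(φ) - conj(Θ(0)) P_Θ(Θφ)‖ / (1 - |Θ(0)|²)^{1/2} ≤ ‖A_φ‖. -/
open MeasureTheory Complex Filter
open scoped ENNReal

noncomputable section

instance : Fact (0 < 2 * Real.pi) := ⟨by positivity⟩

/-- The circle group `ℝ / 2πℤ`, parametrizing the unit circle `∂𝔻`. -/
abbrev 𝕋 := AddCircle (2 * Real.pi)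

/-- Normalized arclength (Haar) measure `|dζ|/2π` on the circle. -/
abbrev μT : Measure 𝕋 := AddCircle.haarAddCircle

/-- The boundary point `e^{iθ} ∈ ∂𝔻` corresponding to `θ : 𝕋`. -/
def bz (θ : 𝕋) : ℂ := (AddCircle.toCircle θ : ℂ)

/-- The `L²(∂𝔻, |dζ|/2π)` inner product `⟨f, g⟩ = ∫ f conj(g)`. -/
def ip (f g : 𝕋 → ℂ) : ℂ := ∫ θ, f θ * (starRingEnd ℂ) (g θ) ∂μT

/-- The `L²(∂𝔻, |dζ|/2π)` norm. -/
def nrm2 (f : 𝕋 → ℂ) : ℝ := (∫ θ, ‖f θ‖ ^ 2 ∂μT) ^ (1 / 2 : ℝ)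

/-- The essential supremum (`L^∞`) norm on `∂𝔻`. -/
def nrmInf (f : 𝕋 → ℂ) : ℝ := (eLpNorm f ⊤ μT).toReal

/-- `f` belongs to the Hardy space `H²`, viewed via boundary values: `f ∈ L²` and all
negatively-indexed Fourier coefficients vanish. -/
def MemH2 (f : 𝕋 → ℂ) : Prop :=
  MemLp f 2 μT ∧ ∀ n : ℤ, n < 0 → fourierCoeff f n = 0

/-- An inner function, recorded through its boundary values: an `H²` function which is
unimodular a.e. on `∂𝔻`. -/
structure InnerFn where
  toFun : 𝕋 → ℂ
  memH2 : MemH2 toFun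
  unimod : ∀ᵐ θ ∂μT, ‖toFun θ‖ = 1

/-- The Poisson extension `𝔓f` of a boundary function `f` at a point `l` of `𝔻`. -/
def poisson (f : 𝕋 → ℂ) (l : ℂ) : ℂ :=
  ∫ θ, (((1 - ‖l‖ ^ 2) / ‖bz θ - l‖ ^ 2 : ℝ) : ℂ) * f θ ∂μT

/-- The value `Θ(l)` of an inner function at a point `l ∈ 𝔻`, recovered from its
boundary values by the Poisson integral. -/
def InnerFn.dval (Θ : InnerFn) (l : ℂ) : ℂ := poisson Θ.toFun l

/-- `Θ` is a non-constant inner function. -/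
def InnerFn.NonConst (Θ : InnerFn) : Prop := ¬ ∃ c : ℂ, ∀ᵐ θ ∂μT, Θ.toFun θ = c

/-- Membership in the model space `K_Θ = H² ⊖ ΘH²`: `f ∈ H²` and `f ⟂ Θg` for all `g ∈ H²`. -/
def MemK (Θ : InnerFn) (f : 𝕋 → ℂ) : Prop :=
  MemH2 f ∧ ∀ g : 𝕋 → ℂ, MemH2 g → ip f (fun θ => Θ.toFun θ * g θ) = 0

/-- `p` is the orthogonal projection `P_Θ(u)` of `u ∈ L²` onto the model space `K_Θ`:
`p ∈ K_Θ` and `u - p ⟂ K_Θ`. -/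
def IsProjK (Θ : InnerFn) (u p : 𝕋 → ℂ) : Prop :=
  MemK Θ p ∧ ∀ k : 𝕋 → ℂ, MemK Θ k → ip (fun θ => u θ - p θ) k = 0

/-- The norm (possibly `∞`) of the truncated Toeplitz operator `A_φ f = P_Θ(φ f)`,
densely defined on `K_Θ^∞ = K_Θ ∩ H^∞`: the supremum of `‖P_Θ(φ f)‖` over unit vectors
`f ∈ K_Θ ∩ H^∞`. -/
def ttNorm (Θ : InnerFn) (φ : 𝕋 → ℂ) : ℝ≥0∞ :=
  sSup {c : ℝ≥0∞ | ∃ f p : 𝕋 → ℂ, MemK Θ f ∧ MemLp f ⊤ μT ∧ nrm2 f = 1 ∧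
    IsProjK Θ (fun θ => φ θ * f θ) p ∧ c = ENNReal.ofReal (nrm2 p)}

/-- The reproducing kernel `k_λ(z) = (1 - conj(Θ(λ))Θ(z))/(1 - conj(λ)z)` of `K_Θ`,
as a boundary function. -/
def kfun (Θ : InnerFn) (l : ℂ) (θ : 𝕋) : ℂ :=
  (1 - (starRingEnd ℂ) (Θ.dval l) * Θ.toFun θ) / (1 - (starRingEnd ℂ) l * bz θ)

/-- The Stolz (nontangential approach) region at a boundary point `z0 ∈ ∂𝔻` with
aperture `κ`. -/
def stolzAt (z0 : ℂ) (κ : ℝ) : Set ℂ := {z : ℂ | ‖z‖ < 1 ∧ ‖z - z0‖ < κ * (1 - ‖z‖)}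

/-- `f` has nontangential limit `L` at the boundary point `z0`. -/
def NTLim (f : ℂ → ℂ) (z0 L : ℂ) : Prop :=
  ∀ κ : ℝ, 1 < κ → Tendsto f (nhdsWithin z0 (stolzAt z0 κ)) (nhds L)

/-- `Θ` has a finite angular derivative at `ζ ∈ ∂𝔻`, with nontangential boundary value `w`
(of modulus one) and angular derivative `w'`: equivalently, `(Θ(z) - w)/(z - ζ)` has
nontangential limit `w'` at `ζ`. -/
def HasAngularDeriv (Θ : InnerFn) (ζ w w' : ℂ) : Prop :=
  ‖w‖ = 1 ∧ NTLim Θ.dval ζ w ∧ NTLim (fun z => (Θ.dval z - w) / (z - ζ)) ζ w'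

end

/-!
The reproducing kernel of `K_Θ` at the origin, `k₀ = kfun Θ 0 = 1 - conj(Θ(0)) Θ`, is a bounded
element of `K_Θ` with `‖k₀‖² = 1 - |Θ(0)|²`, which is positive because `Θ` is not constant.
By linearity of `P_Θ`, `A_φ k₀ = P_Θ(φ) - conj(Θ(0)) P_Θ(Θφ)`, so the left-hand side is
`‖A_φ k₀‖ / ‖k₀‖ ≤ ‖A_φ‖`. That `k₀ ⟂ ΘH²` follows from Parseval: `∫ F G = F(0) G(0)` for
`F, G ∈ H²`, and multiplication by `Θ` is isometric.
-/

open ComplexConjugate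
open scoped InnerProductSpace

section Parseval

variable {T : ℝ} [Fact (0 < T)]

open AddCircle

lemma fourierCoeff_zero_eq_integral (f : AddCircle T → ℂ) :
    fourierCoeff f 0 = ∫ t, f t ∂haarAddCircle := by
  simp [fourierCoeff]

lemma fourierCoeff_const (a : ℂ) {n : ℤ} (hn : n ≠ 0) :
    fourierCoeff (fun _ : AddCircle T => a) n = 0 := by
  have h := fourierCoeff.const_mul (fourier (T := T) 0) a n
  simp only [fourier_zero, mul_one, fourierCoeff_fourier] at h
  simp [h, hn]

lemma fourierCoeff_conj (f : AddCircle T → ℂ) (n : ℤ) :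
    fourierCoeff (fun t => conj (f t)) n = conj (fourierCoeff f (-n)) := by
  simp only [fourierCoeff, ← integral_conj, smul_eq_mul, map_mul, ← fourier_neg, neg_neg]

lemma hasSum_conj_fourierCoeff_mul {f g : AddCircle T → ℂ} (hf : MemLp f 2 haarAddCircle)
    (hg : MemLp g 2 haarAddCircle) :
    HasSum (fun n => conj (fourierCoeff f n) * fourierCoeff g n)
      (∫ t, conj (f t) * g t ∂haarAddCircle) := by
  have hinner : ∫ t, conj (f t) * g t ∂haarAddCircle = ⟪hf.toLp f, hg.toLp g⟫_ℂ := by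
    rw [L2.inner_def]
    refine integral_congr_ae ?_
    filter_upwards [hf.coeFn_toLp, hg.coeFn_toLp] with t hft hgt
    simp [hft, hgt, mul_comm]
  rw [hinner]
  refine (fourierBasis.hasSum_inner_mul_inner (hf.toLp f) (hg.toLp g)).congr_fun fun n => ?_
  rw [← inner_conj_symm (hf.toLp f), ← fourierBasis.repr_apply_apply,
    ← fourierBasis.repr_apply_apply, fourierBasis_repr, fourierBasis_repr,
    fourierCoeff_congr_ae hf.coeFn_toLp, fourierCoeff_congr_ae hg.coeFn_toLp]

end Parseval

section Hardy

variable {f g : 𝕋 → ℂ}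

lemma memH2_const (a : ℂ) : MemH2 (fun _ => a) :=
  ⟨memLp_const a, fun _ hn => fourierCoeff_const a hn.ne⟩

lemma MemH2.const_mul (hf : MemH2 f) (c : ℂ) : MemH2 (fun θ => c * f θ) :=
  ⟨hf.1.const_mul c, fun n hn => by rw [fourierCoeff.const_mul, hf.2 n hn, mul_zero]⟩

lemma MemH2.sub (hf : MemH2 f) (hg : MemH2 g) : MemH2 (fun θ => f θ - g θ) := by
  refine ⟨hf.1.sub hg.1, fun n hn => ?_⟩
  have hfg : (fun θ => f θ - g θ) = f + fun θ => -1 * g θ := by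
    ext θ
    simp [sub_eq_add_neg]
  rw [hfg, fourierCoeff.add (hf.1.integrable one_le_two) ((hg.1.const_mul _).integrable one_le_two),
    Pi.add_apply, fourierCoeff.const_mul, hf.2 n hn, hg.2 n hn, mul_zero, add_zero]

/-- Parseval's identity in `H²`: only the constant terms of the two Fourier series pair up. -/
lemma MemH2.integral_mul (hf : MemH2 f) (hg : MemH2 g) :
    ∫ θ, f θ * g θ ∂μT = (∫ θ, f θ ∂μT) * ∫ θ, g θ ∂μT := by
  have h := hasSum_conj_fourierCoeff_mul (f := fun θ => conj (f θ)) hf.1.star hg.1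
  simp only [fourierCoeff_conj, conj_conj] at h
  rw [h.unique (hasSum_single 0 fun n hn => ?_), neg_zero, fourierCoeff_zero_eq_integral,
    fourierCoeff_zero_eq_integral]
  rcases hn.lt_or_gt with hn | hn
  · rw [hg.2 n hn, mul_zero]
  · rw [hf.2 (-n) (by omega), zero_mul]

end Hardy

section ModelSpace

variable {f g k u v p q : 𝕋 → ℂ}

lemma ip_const_mul_left (c : ℂ) (f g : 𝕋 → ℂ) : ip (fun θ => c * f θ) g = c * ip f g := by
  simp only [ip, mul_assoc, integral_const_mul]

lemma ip_sub_left (hf : MemLp f 2 μT) (hg : MemLp g 2 μT) (hk : MemLp k 2 μT) :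
    ip (fun θ => f θ - g θ) k = ip f k - ip g k := by
  simp only [ip, sub_mul]
  exact integral_sub (hf.integrable_mul hk.star) (hg.integrable_mul hk.star)

lemma ip_const_one_left (g : 𝕋 → ℂ) : ip (fun _ => 1) g = conj (∫ θ, g θ ∂μT) := by
  simp [ip, integral_conj]

lemma InnerFn.memLp_top (Θ : InnerFn) : MemLp Θ.toFun ⊤ μT :=
  memLp_top_of_bound Θ.memH2.1.1 1 (Θ.unimod.mono fun _ h => h.le)

lemma InnerFn.memLp_mul (Θ : InnerFn) (hg : MemLp g 2 μT) :
    MemLp (fun θ => Θ.toFun θ * g θ) 2 μT :=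
  hg.mul' Θ.memLp_top

lemma InnerFn.ip_mul_mul (Θ : InnerFn) (f g : 𝕋 → ℂ) :
    ip (fun θ => Θ.toFun θ * f θ) (fun θ => Θ.toFun θ * g θ) = ip f g := by
  refine integral_congr_ae ?_
  filter_upwards [Θ.unimod] with θ hθ
  have hΘ : Θ.toFun θ * conj (Θ.toFun θ) = 1 := by
    rw [mul_conj, normSq_eq_norm_sq, hθ]
    norm_num
  calc Θ.toFun θ * f θ * conj (Θ.toFun θ * g θ)
      = Θ.toFun θ * conj (Θ.toFun θ) * (f θ * conj (g θ)) := by rw [map_mul]; ring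
    _ = f θ * conj (g θ) := by rw [hΘ, one_mul]

lemma InnerFn.dval_zero (Θ : InnerFn) : Θ.dval 0 = ∫ θ, Θ.toFun θ ∂μT := by
  refine integral_congr_ae (ae_of_all _ fun θ => ?_)
  have : ‖bz θ‖ = 1 := by simp [bz, Circle.norm_coe]
  simp [this]

variable {Θ : InnerFn}

lemma MemK.const_mul (hf : MemK Θ f) (c : ℂ) : MemK Θ (fun θ => c * f θ) :=
  ⟨hf.1.const_mul c, fun g hg => by rw [ip_const_mul_left, hf.2 g hg, mul_zero]⟩

lemma MemK.sub (hf : MemK Θ f) (hg : MemK Θ g) : MemK Θ (fun θ => f θ - g θ) :=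
  ⟨hf.1.sub hg.1, fun h hh => by
    rw [ip_sub_left hf.1.1 hg.1.1 (Θ.memLp_mul hh.1), hf.2 h hh, hg.2 h hh, sub_zero]⟩

lemma IsProjK.const_mul (hp : IsProjK Θ u p) (c : ℂ) :
    IsProjK Θ (fun θ => c * u θ) (fun θ => c * p θ) := by
  refine ⟨hp.1.const_mul c, fun k hk => ?_⟩
  simp only [← mul_sub]
  rw [ip_const_mul_left, hp.2 k hk, mul_zero]

lemma IsProjK.sub (hp : IsProjK Θ u p) (hq : IsProjK Θ v q) (hu : MemLp u 2 μT)
    (hv : MemLp v 2 μT) : IsProjK Θ (fun θ => u θ - v θ) (fun θ => p θ - q θ) := by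
  refine ⟨hp.1.sub hq.1, fun k hk => ?_⟩
  have hsplit : (fun θ => u θ - v θ - (p θ - q θ)) = fun θ => (u θ - p θ) - (v θ - q θ) := by
    ext θ
    ring
  rw [hsplit, ip_sub_left (f := fun θ => u θ - p θ) (g := fun θ => v θ - q θ)
    (hu.sub hp.1.1.1) (hv.sub hq.1.1.1) hk.1.1, hp.2 k hk, hq.2 k hk, sub_zero]

end ModelSpace

section KernelAtZero

variable (Θ : InnerFn)

lemma kfun_zero : kfun Θ 0 = fun θ => 1 - conj (Θ.dval 0) * Θ.toFun θ := by
  ext θ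
  simp [kfun]

lemma memLp_top_kfun_zero : MemLp (kfun Θ 0) ⊤ μT := by
  rw [kfun_zero]
  exact (memLp_const 1).sub (Θ.memLp_top.const_mul _)

lemma memK_kfun_zero : MemK Θ (kfun Θ 0) := by
  rw [kfun_zero]
  refine ⟨(memH2_const 1).sub (Θ.memH2.const_mul _), fun g hg => ?_⟩
  have hΘ : ip Θ.toFun (fun θ => Θ.toFun θ * g θ) = conj (∫ θ, g θ ∂μT) := by
    simpa [ip_const_one_left] using Θ.ip_mul_mul (fun _ => 1) g
  rw [ip_sub_left (memLp_const 1) (Θ.memH2.1.const_mul _) (Θ.memLp_mul hg.1),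
    ip_const_mul_left, hΘ, ip_const_one_left, Θ.memH2.integral_mul hg, ← Θ.dval_zero, map_mul,
    sub_self]

lemma integral_norm_sq_kfun_zero : ∫ θ, ‖kfun Θ 0 θ‖ ^ 2 ∂μT = 1 - ‖Θ.dval 0‖ ^ 2 := by
  set c := conj (Θ.dval 0)
  have hpt : ∀ᵐ θ ∂μT, ‖kfun Θ 0 θ‖ ^ 2 = 1 + ‖Θ.dval 0‖ ^ 2 - 2 * (c * Θ.toFun θ).re := by
    filter_upwards [Θ.unimod] with θ hθ
    have hθ' : normSq (Θ.toFun θ) = 1 := by rw [normSq_eq_norm_sq, hθ, one_pow]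
    simp [kfun_zero, ← normSq_eq_norm_sq, normSq_sub, hθ', c]
  have hint : Integrable (fun θ => c * Θ.toFun θ) μT :=
    (Θ.memH2.1.integrable one_le_two).const_mul c
  have hint_re : Integrable (fun θ => (c * Θ.toFun θ).re) μT := hint.re
  have hre : ∫ θ, (c * Θ.toFun θ).re ∂μT = (∫ θ, c * Θ.toFun θ ∂μT).re := integral_re hint
  rw [integral_congr_ae hpt, integral_sub (integrable_const _) (hint_re.const_mul 2),
    integral_const_mul, hre, integral_const_mul, ← Θ.dval_zero, conj_mul']
  norm_cast
  simp only [integral_const, probReal_univ, smul_eq_mul, one_mul]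
  ring

end KernelAtZero

lemma InnerFn.NonConst.norm_dval_zero_sq_lt_one {Θ : InnerFn} (hΘ : Θ.NonConst) :
    ‖Θ.dval 0‖ ^ 2 < 1 := by
  by_contra hge
  have hint : Integrable (fun θ => ‖kfun Θ 0 θ‖ ^ 2) μT :=
    (memK_kfun_zero Θ).1.1.integrable_norm_pow two_ne_zero
  have hk : ∀ᵐ θ ∂μT, kfun Θ 0 θ = 0 := by
    have h0 := (integral_eq_zero_iff_of_nonneg (fun _ => by positivity) hint).1
      (le_antisymm (by linarith [integral_norm_sq_kfun_zero Θ])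
        (integral_nonneg fun _ => by positivity))
    filter_upwards [h0] with θ hθ
    simpa using hθ
  rw [kfun_zero] at hk
  by_cases hc : Θ.dval 0 = 0
  · obtain ⟨θ, hθ⟩ := hk.exists
    simp [hc] at hθ
  · refine hΘ ⟨(conj (Θ.dval 0))⁻¹, hk.mono fun θ hθ => ?_⟩
    exact eq_inv_of_mul_eq_one_left (by rw [mul_comm]; exact (sub_eq_zero.1 hθ).symm)

lemma nrm2_nonneg (f : 𝕋 → ℂ) : 0 ≤ nrm2 f :=
  Real.rpow_nonneg (integral_nonneg fun _ => by positivity) _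

lemma nrm2_const_mul (c : ℂ) (f : 𝕋 → ℂ) : nrm2 (fun θ => c * f θ) = ‖c‖ * nrm2 f := by
  simp only [nrm2, norm_mul, mul_pow, integral_const_mul]
  rw [Real.mul_rpow (by positivity) (integral_nonneg fun _ => by positivity),
    ← Real.sqrt_eq_rpow, Real.sqrt_sq (norm_nonneg c)]

lemma nrm2_kfun_zero (Θ : InnerFn) : nrm2 (kfun Θ 0) = √(1 - ‖Θ.dval 0‖ ^ 2) := by
  rw [nrm2, integral_norm_sq_kfun_zero, Real.sqrt_eq_rpow]

lemma ofReal_nrm2_div_le_ttNorm {Θ : InnerFn} {φ f p : 𝕋 → ℂ} (hf : MemK Θ f)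
    (hf_top : MemLp f ⊤ μT) (hf0 : nrm2 f ≠ 0) (hp : IsProjK Θ (fun θ => φ θ * f θ) p) :
    ENNReal.ofReal (nrm2 p / nrm2 f) ≤ ttNorm Θ φ := by
  set r : ℂ := (((nrm2 f)⁻¹ : ℝ) : ℂ)
  have hr : ‖r‖ = (nrm2 f)⁻¹ := by simp [r, abs_of_nonneg (nrm2_nonneg f)]
  refine le_sSup ⟨fun θ => r * f θ, fun θ => r * p θ, hf.const_mul r, hf_top.const_mul r, ?_, ?_, ?_⟩
  · rw [nrm2_const_mul, hr, inv_mul_cancel₀ hf0]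
  · simpa only [mul_left_comm] using hp.const_mul r
  · rw [nrm2_const_mul, hr, div_eq_inv_mul]

/-- `‖P_Θ(φ) - conj(Θ(0)) P_Θ(Θφ)‖ / (1-|Θ(0)|²)^{1/2} ≤ ‖A_φ‖`. -/
theorem ttNorm_lower_proj (Θ : InnerFn) (hΘ : Θ.NonConst) (φ : 𝕋 → ℂ)
    (hφ : MemLp φ 2 μT) (p q : 𝕋 → ℂ) (hp : IsProjK Θ φ p)
    (hq : IsProjK Θ (fun θ => Θ.toFun θ * φ θ) q) :
    ENNReal.ofReal (nrm2 (fun θ => p θ - (starRingEnd ℂ) (Θ.dval 0) * q θ) /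
      Real.sqrt (1 - ‖Θ.dval 0‖ ^ 2)) ≤ ttNorm Θ φ := by
  set c := conj (Θ.dval 0)
  have hφk : (fun θ => φ θ * kfun Θ 0 θ) = fun θ => φ θ - c * (Θ.toFun θ * φ θ) := by
    ext θ
    rw [kfun_zero]
    ring
  have hproj : IsProjK Θ (fun θ => φ θ * kfun Θ 0 θ) (fun θ => p θ - c * q θ) := by
    rw [hφk]
    exact hp.sub (hq.const_mul c) hφ ((Θ.memLp_mul hφ).const_mul c)
  have hk : nrm2 (kfun Θ 0) ≠ 0 := by
    rw [nrm2_kfun_zero]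
    exact (Real.sqrt_pos.2 (sub_pos.2 hΘ.norm_dval_zero_sq_lt_one)).ne'
  simpa only [nrm2_kfun_zero] using
    ofReal_nrm2_div_le_ttNorm (memK_kfun_zero Θ) (memLp_top_kfun_zero Θ) hk hproj
end

section
/- If Θ is a non-constant inner function and φ ∈ K_Θ ∩ H^∞, then ‖φ‖_{L²} ≤ (1 - |Θ(0)|²)^{1/2} · ‖φ‖_∞. -/
open MeasureTheory Complex Filter
open scoped ENNReal

/-!
Since `φ ∈ K_Θ` is orthogonal to `Θφ`, the function `|φ|²` is orthogonal to `Θ`, so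
`‖φ‖₂² = ∫ |φ|² (1 - Θ(0) Θ̄)`. Bounding one factor `|φ|` by `‖φ‖_∞` and applying
Cauchy–Schwarz gives `‖φ‖₂ ≤ ‖φ‖_∞ ‖1 - Θ(0) Θ̄‖₂`, and `‖1 - Θ(0) Θ̄‖₂² = 1 - |Θ(0)|²`
because `|Θ| = 1` a.e. and `Θ(0)` is the mean of `Θ`.
-/

open ComplexConjugate

section

variable {α : Type*} [MeasurableSpace α] {μ : Measure α}

theorem integral_norm_mul_norm_le_sqrt_mul_sqrt {E : Type*} [NormedAddCommGroup E] {f g : α → E}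
    (hf : MemLp f 2 μ) (hg : MemLp g 2 μ) :
    ∫ x, ‖f x‖ * ‖g x‖ ∂μ ≤ √(∫ x, ‖f x‖ ^ 2 ∂μ) * √(∫ x, ‖g x‖ ^ 2 ∂μ) := by
  have h := integral_mul_norm_le_Lp_mul_Lq (f := f) (g := g) Real.HolderConjugate.two_two
    (by rwa [ENNReal.ofReal_ofNat]) (by rwa [ENNReal.ofReal_ofNat])
  simpa only [Real.rpow_two, Real.sqrt_eq_rpow] using h

theorem sqrt_integral_norm_sq_le_of_integral_norm_sq_mul_eq {f ψ : α → ℂ} {M : ℝ}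
    (hf : MemLp f 2 μ) (hψ : MemLp ψ 2 μ) (hM₀ : 0 ≤ M) (hM : ∀ᵐ x ∂μ, ‖f x‖ ≤ M)
    (h : ∫ x, ((‖f x‖ ^ 2 : ℝ) : ℂ) * ψ x ∂μ = ∫ x, ((‖f x‖ ^ 2 : ℝ) : ℂ) ∂μ) :
    √(∫ x, ‖f x‖ ^ 2 ∂μ) ≤ M * √(∫ x, ‖ψ x‖ ^ 2 ∂μ) := by
  set I := ∫ x, ‖f x‖ ^ 2 ∂μ
  set J := ∫ x, ‖ψ x‖ ^ 2 ∂μ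
  have hI₀ : 0 ≤ I := integral_nonneg fun x => sq_nonneg _
  have key : I ≤ M * (√I * √J) := calc
    I = ‖∫ x, ((‖f x‖ ^ 2 : ℝ) : ℂ) * ψ x ∂μ‖ := by
      rw [h, integral_complex_ofReal, Complex.norm_real, Real.norm_of_nonneg hI₀]
    _ ≤ ∫ x, ‖f x‖ ^ 2 * ‖ψ x‖ ∂μ := by
      refine (norm_integral_le_integral_norm _).trans_eq (congr_arg _ (funext fun x => ?_))
      simp
    _ ≤ ∫ x, M * (‖f x‖ * ‖ψ x‖) ∂μ := by
      refine integral_mono_of_nonneg (.of_forall fun x => by positivity)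
        ((hf.norm.integrable_mul hψ.norm).const_mul M) ?_
      filter_upwards [hM] with x hx
      rw [sq, mul_assoc]
      gcongr
    _ = M * ∫ x, ‖f x‖ * ‖ψ x‖ ∂μ := integral_const_mul _ _
    _ ≤ M * (√I * √J) := by
      gcongr
      exact integral_norm_mul_norm_le_sqrt_mul_sqrt hf hψ
  have hsq : √I * √I = I := Real.mul_self_sqrt hI₀
  rcases (Real.sqrt_nonneg I).eq_or_lt with h0 | hpos
  · rw [← h0]; positivity
  · nlinarith [Real.sqrt_nonneg J]

theorem integral_norm_one_sub_integral_mul_conj_sq [IsProbabilityMeasure μ] {u : α → ℂ}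
    (hu : Integrable u μ) (hu₁ : ∀ᵐ x ∂μ, ‖u x‖ = 1) :
    ∫ x, ‖1 - (∫ y, u y ∂μ) * conj (u x)‖ ^ 2 ∂μ = 1 - ‖∫ x, u x ∂μ‖ ^ 2 := by
  set c := ∫ y, u y ∂μ
  have hz : Integrable (fun x => c * conj (u x)) μ :=
    ((memLp_one_iff_integrable.2 hu).star.integrable le_rfl).const_mul c
  have hpt : ∀ᵐ x ∂μ, ‖1 - c * conj (u x)‖ ^ 2 = 1 + ‖c‖ ^ 2 - 2 * (c * conj (u x)).re := by
    filter_upwards [hu₁] with x hx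
    rw [Complex.sq_norm, Complex.normSq_sub, Complex.normSq_one, one_mul, Complex.conj_re,
      Complex.normSq_mul, Complex.normSq_conj, ← Complex.sq_norm, ← Complex.sq_norm, hx]
    ring
  have hre : ∫ x, (c * conj (u x)).re ∂μ = ‖c‖ ^ 2 := by
    have h := integral_re hz
    simp only [RCLike.re_to_complex] at h
    rw [h, integral_const_mul, integral_conj, Complex.mul_conj, Complex.ofReal_re,
      Complex.normSq_eq_norm_sq]
  have hz_re : Integrable (fun x => (c * conj (u x)).re) μ := hz.re
  rw [integral_congr_ae hpt, integral_sub (integrable_const _) (hz_re.const_mul 2),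
    integral_const_mul, hre]
  simp only [integral_const, probReal_univ, smul_eq_mul, one_mul]
  ring

end

theorem poisson_zero (f : 𝕋 → ℂ) : poisson f 0 = ∫ θ, f θ ∂μT := by
  simp [poisson, bz, Circle.norm_coe]

theorem MemK.integral_norm_sq_mul_conj_eq_zero {Θ : InnerFn} {f : 𝕋 → ℂ} (hf : MemK Θ f) :
    ∫ θ, ((‖f θ‖ ^ 2 : ℝ) : ℂ) * conj (Θ.toFun θ) ∂μT = 0 := by
  rw [← hf.2 f hf.1, ip]
  congr 1 with θ
  rw [map_mul, mul_comm (conj _), ← mul_assoc, Complex.mul_conj, Complex.normSq_eq_norm_sq,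
    mul_comm]

theorem MemK.integral_norm_sq_mul_one_sub_conj {Θ : InnerFn} {f : 𝕋 → ℂ} (hf : MemK Θ f) (c : ℂ) :
    ∫ θ, ((‖f θ‖ ^ 2 : ℝ) : ℂ) * (1 - c * conj (Θ.toFun θ)) ∂μT =
      ∫ θ, ((‖f θ‖ ^ 2 : ℝ) : ℂ) ∂μT := by
  have hsq : Integrable (fun θ => ((‖f θ‖ ^ 2 : ℝ) : ℂ)) μT := hf.1.1.norm.integrable_sq.ofReal
  have hint : Integrable (fun θ => ((‖f θ‖ ^ 2 : ℝ) : ℂ) * conj (Θ.toFun θ)) μT := by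
    refine hsq.mul_bdd (c := 1) Θ.memH2.1.star.1 ?_
    filter_upwards [Θ.unimod] with θ hθ
    simp [hθ]
  simp only [mul_sub, mul_one, mul_left_comm _ c]
  rw [integral_sub hsq (hint.const_mul c), integral_const_mul, hf.integral_norm_sq_mul_conj_eq_zero,
    mul_zero, sub_zero]

theorem nrm2_le_of_memK_general (Θ : InnerFn) (φ : 𝕋 → ℂ)
    (hφK : MemK Θ φ) (hphiInf : MemLp φ ⊤ μT) :
    nrm2 φ ≤ Real.sqrt (1 - ‖Θ.dval 0‖ ^ 2) * nrmInf φ := by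
  have hΘ₂ : MemLp Θ.toFun 2 μT := Θ.memH2.1
  have hψ : MemLp (fun θ => 1 - (∫ x, Θ.toFun x ∂μT) * conj (Θ.toFun θ)) 2 μT :=
    (memLp_const 1).sub (hΘ₂.star.const_mul _)
  rw [nrm2, ← Real.sqrt_eq_rpow, nrmInf, toReal_eLpNorm hphiInf.1, InnerFn.dval, poisson_zero,
    ← integral_norm_one_sub_integral_mul_conj_sq (hΘ₂.integrable one_le_two) Θ.unimod,
    mul_comm (Real.sqrt _)]
  exact sqrt_integral_norm_sq_le_of_integral_norm_sq_mul_eq hφK.1.1 hψ lpNorm_nonneg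
    (ae_le_lpNorm_exponent_top hphiInf) (hφK.integral_norm_sq_mul_one_sub_conj _)

/-- for `φ ∈ K_Θ ∩ H^∞`, `‖φ‖_{L²} ≤ (1-|Θ(0)|²)^{1/2} ‖φ‖_∞`. -/
theorem nrm2_le_of_memK (Θ : InnerFn) (hΘ : Θ.NonConst) (φ : 𝕋 → ℂ)
    (hφK : MemK Θ φ) (hphiInf : MemLp φ ⊤ μT) :
    nrm2 φ ≤ Real.sqrt (1 - ‖Θ.dval 0‖ ^ 2) * nrmInf φ :=
  nrm2_le_of_memK_general Θ φ hφK hphiInf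
end
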